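/- For all t = (t₁,t₂) ∈ ℝ² and all y ∈ ℝ⁴ with y ≠ 0, the 6×6 matrix G = G(t,y) satisfies det G = 32 / (|y|·(1+|y|²)³·(1+|t|²)²); in particular det G > 0. -/

import Mathlib

open Matrix

lemma vc5 {α : Type*} (a : α) (u : Fin 5 → α) : Matrix.vecCons a u 5 = u 4 := rfl
lemma vc4 {α : Type*} (a : α) (u : Fin 4 → α) : Matrix.vecCons a u 4 = u 3 := rfl
lemma vc3 {α : Type*} (a : α) (u : Fin 3 → α) : Matrix.vecCons a u 3 = u 2 := rfl
lemma vc2 {α : Type*} (a : α) (u : Fin 2 → α) : Matrix.vecCons a u 2 = u 1 := rfl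
lemma vc1 {α : Type*} (a : α) (u : Fin 1 → α) : Matrix.vecCons a u 1 = u 0 := rfl

theorem det_fin_four (A : Matrix (Fin 4) (Fin 4) ℝ) :
    det A =
      A 0 0 * (A 1 1 * A 2 2 * A 3 3 - A 1 1 * A 2 3 * A 3 2 - A 1 2 * A 2 1 * A 3 3
        + A 1 2 * A 2 3 * A 3 1 + A 1 3 * A 2 1 * A 3 2 - A 1 3 * A 2 2 * A 3 1)
      - A 0 1 * (A 1 0 * A 2 2 * A 3 3 - A 1 0 * A 2 3 * A 3 2 - A 1 2 * A 2 0 * A 3 3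
        + A 1 2 * A 2 3 * A 3 0 + A 1 3 * A 2 0 * A 3 2 - A 1 3 * A 2 2 * A 3 0)
      + A 0 2 * (A 1 0 * A 2 1 * A 3 3 - A 1 0 * A 2 3 * A 3 1 - A 1 1 * A 2 0 * A 3 3
        + A 1 1 * A 2 3 * A 3 0 + A 1 3 * A 2 0 * A 3 1 - A 1 3 * A 2 1 * A 3 0)
      - A 0 3 * (A 1 0 * A 2 1 * A 3 2 - A 1 0 * A 2 2 * A 3 1 - A 1 1 * A 2 0 * A 3 2
        + A 1 1 * A 2 2 * A 3 0 + A 1 2 * A 2 0 * A 3 1 - A 1 2 * A 2 1 * A 3 0) := by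
  rw [Matrix.det_succ_row_zero]
  simp [Fin.sum_univ_succ, Matrix.det_fin_three, Matrix.submatrix_apply, Fin.succAbove, show (Fin.succ 2 : Fin 4) = 3 from rfl, show (Fin.castSucc 2 : Fin 4) = 2 from rfl, show (Fin.castSucc 1 : Fin 4) = 1 from rfl, show (Fin.castSucc 0 : Fin 4) = 0 from rfl]
  ring


lemma subm6_0 (M : Matrix (Fin 6) (Fin 6) ℝ) :
    M.submatrix (Fin.succAbove 0) Fin.succ = (!![M 1 1, M 1 2, M 1 3, M 1 4, M 1 5; M 2 1, M 2 2, M 2 3, M 2 4, M 2 5; M 3 1, M 3 2, M 3 3, M 3 4, M 3 5; M 4 1, M 4 2, M 4 3, M 4 4, M 4 5; M 5 1, M 5 2, M 5 3, M 5 4, M 5 5] : Matrix (Fin 5) (Fin 5) ℝ) := by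
  ext i j; fin_cases i <;> fin_cases j <;> rfl

lemma subm6_1 (M : Matrix (Fin 6) (Fin 6) ℝ) :
    M.submatrix (Fin.succAbove 1) Fin.succ = (!![M 0 1, M 0 2, M 0 3, M 0 4, M 0 5; M 2 1, M 2 2, M 2 3, M 2 4, M 2 5; M 3 1, M 3 2, M 3 3, M 3 4, M 3 5; M 4 1, M 4 2, M 4 3, M 4 4, M 4 5; M 5 1, M 5 2, M 5 3, M 5 4, M 5 5] : Matrix (Fin 5) (Fin 5) ℝ) := by
  ext i j; fin_cases i <;> fin_cases j <;> rfl

lemma subm6_2 (M : Matrix (Fin 6) (Fin 6) ℝ) :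
    M.submatrix (Fin.succAbove 2) Fin.succ = (!![M 0 1, M 0 2, M 0 3, M 0 4, M 0 5; M 1 1, M 1 2, M 1 3, M 1 4, M 1 5; M 3 1, M 3 2, M 3 3, M 3 4, M 3 5; M 4 1, M 4 2, M 4 3, M 4 4, M 4 5; M 5 1, M 5 2, M 5 3, M 5 4, M 5 5] : Matrix (Fin 5) (Fin 5) ℝ) := by
  ext i j; fin_cases i <;> fin_cases j <;> rfl

lemma subm5_0 (M : Matrix (Fin 5) (Fin 5) ℝ) :
    M.submatrix (Fin.succAbove 0) Fin.succ = (!![M 1 1, M 1 2, M 1 3, M 1 4; M 2 1, M 2 2, M 2 3, M 2 4; M 3 1, M 3 2, M 3 3, M 3 4; M 4 1, M 4 2, M 4 3, M 4 4] : Matrix (Fin 4) (Fin 4) ℝ) := by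
  ext i j; fin_cases i <;> fin_cases j <;> rfl

lemma subm5_1 (M : Matrix (Fin 5) (Fin 5) ℝ) :
    M.submatrix (Fin.succAbove 1) Fin.succ = (!![M 0 1, M 0 2, M 0 3, M 0 4; M 2 1, M 2 2, M 2 3, M 2 4; M 3 1, M 3 2, M 3 3, M 3 4; M 4 1, M 4 2, M 4 3, M 4 4] : Matrix (Fin 4) (Fin 4) ℝ) := by
  ext i j; fin_cases i <;> fin_cases j <;> rfl

lemma det5_gen (M : Matrix (Fin 5) (Fin 5) ℝ) (h2 : M 2 0 = 0) (h3 : M 3 0 = 0)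
    (h4 : M 4 0 = 0) :
    M.det = M 0 0 * (!![M 1 1, M 1 2, M 1 3, M 1 4; M 2 1, M 2 2, M 2 3, M 2 4; M 3 1, M 3 2, M 3 3, M 3 4; M 4 1, M 4 2, M 4 3, M 4 4] : Matrix (Fin 4) (Fin 4) ℝ).det
      - M 1 0 * (!![M 0 1, M 0 2, M 0 3, M 0 4; M 2 1, M 2 2, M 2 3, M 2 4; M 3 1, M 3 2, M 3 3, M 3 4; M 4 1, M 4 2, M 4 3, M 4 4] : Matrix (Fin 4) (Fin 4) ℝ).det := by
  rw [Matrix.det_succ_column_zero, Fin.sum_univ_five, subm5_0, subm5_1, h2, h3, h4]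
  norm_num
  ring_nf

lemma det6_gen (M : Matrix (Fin 6) (Fin 6) ℝ)
    (h30 : M 3 0 = 0) (h40 : M 4 0 = 0) (h50 : M 5 0 = 0)
    (h31 : M 3 1 = 0) (h41 : M 4 1 = 0) (h51 : M 5 1 = 0) :
    M.det = (M 0 0 * M 1 1 - M 0 1 * M 1 0) *
        (!![M 2 2, M 2 3, M 2 4, M 2 5; M 3 2, M 3 3, M 3 4, M 3 5; M 4 2, M 4 3, M 4 4, M 4 5; M 5 2, M 5 3, M 5 4, M 5 5] : Matrix (Fin 4) (Fin 4) ℝ).det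
      - (M 0 0 * M 2 1 - M 0 1 * M 2 0) *
        (!![M 1 2, M 1 3, M 1 4, M 1 5; M 3 2, M 3 3, M 3 4, M 3 5; M 4 2, M 4 3, M 4 4, M 4 5; M 5 2, M 5 3, M 5 4, M 5 5] : Matrix (Fin 4) (Fin 4) ℝ).det
      + (M 1 0 * M 2 1 - M 1 1 * M 2 0) *
        (!![M 0 2, M 0 3, M 0 4, M 0 5; M 3 2, M 3 3, M 3 4, M 3 5; M 4 2, M 4 3, M 4 4, M 4 5; M 5 2, M 5 3, M 5 4, M 5 5] : Matrix (Fin 4) (Fin 4) ℝ).det := by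
  rw [Matrix.det_succ_column_zero, Fin.sum_univ_six, subm6_0, subm6_1, subm6_2, h30, h40, h50]
  rw [det5_gen _ (by simp [h31]) (by simp [h41]) (by simp [h51]),
      det5_gen _ (by simp [h31]) (by simp [h41]) (by simp [h51]),
      det5_gen _ (by simp [h31]) (by simp [h41]) (by simp [h51])]
  simp
  ring_nf


/-- The Euclidean norm `|y|` of `y ∈ ℝ⁴` (0-indexed coordinates). -/
noncomputable def nY (y : Fin 4 → ℝ) : ℝ :=
  Real.sqrt (y 0 ^ 2 + y 1 ^ 2 + y 2 ^ 2 + y 3 ^ 2)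

/-- The `3 × 2` matrix `A(t, y)`. -/
noncomputable def A (t : Fin 2 → ℝ) (y : Fin 4 → ℝ) : Matrix (Fin 3) (Fin 2) ℝ :=
  (4 * nY y / ((1 + nY y ^ 2) ^ 2 * (1 + t 0 ^ 2 + t 1 ^ 2) ^ 2)) •
    ((1 - nY y ^ 2) •
        !![-2 * t 0, -2 * t 1;
           1 - t 0 ^ 2 + t 1 ^ 2, -2 * t 0 * t 1;
           -2 * t 0 * t 1, 1 + t 0 ^ 2 - t 1 ^ 2] +
      (2 * nY y) •
        !![-2 * t 1, 2 * t 0;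
           -2 * t 0 * t 1, -1 + t 0 ^ 2 - t 1 ^ 2;
           1 + t 0 ^ 2 - t 1 ^ 2, 2 * t 0 * t 1])

/-- The `3 × 4` matrix `B(t, y) = (2 / (|y|(1+|y|²)(1+|t|²))) · u·yᵀ`,
where `u = (1−|t|², 2t₁, 2t₂)ᵀ`. -/
noncomputable def B (t : Fin 2 → ℝ) (y : Fin 4 → ℝ) : Matrix (Fin 3) (Fin 4) ℝ :=
  (2 / (nY y * (1 + nY y ^ 2) * (1 + t 0 ^ 2 + t 1 ^ 2))) •
    Matrix.vecMulVec ![1 - t 0 ^ 2 - t 1 ^ 2, 2 * t 0, 2 * t 1] y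

/-- The `3 × 4` matrix `C(y) = (1/|y|²) · (rows iy, jy, ky)`. -/
noncomputable def C (y : Fin 4 → ℝ) : Matrix (Fin 3) (Fin 4) ℝ :=
  (1 / (y 0 ^ 2 + y 1 ^ 2 + y 2 ^ 2 + y 3 ^ 2)) •
    !![-y 1,  y 0, -y 3,  y 2;
       -y 2,  y 3,  y 0, -y 1;
       -y 3, -y 2,  y 1,  y 0]

/-- The `6 × 6` block matrix `G(t, y)` with blocks `A, B; 0, C`. -/
noncomputable def G (t : Fin 2 → ℝ) (y : Fin 4 → ℝ) : Matrix (Fin 6) (Fin 6) ℝ :=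
  !![A t y 0 0, A t y 0 1, B t y 0 0, B t y 0 1, B t y 0 2, B t y 0 3;
     A t y 1 0, A t y 1 1, B t y 1 0, B t y 1 1, B t y 1 2, B t y 1 3;
     A t y 2 0, A t y 2 1, B t y 2 0, B t y 2 1, B t y 2 2, B t y 2 3;
     0, 0, C y 0 0, C y 0 1, C y 0 2, C y 0 3;
     0, 0, C y 1 0, C y 1 1, C y 1 2, C y 1 3;
     0, 0, C y 2 0, C y 2 1, C y 2 2, C y 2 3]

lemma Dval (k c u y0 y1 y2 y3 : ℝ) :
    (!![k * (u * y0), k * (u * y1), k * (u * y2), k * (u * y3);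
        c * -y1, c * y0, c * -y3, c * y2;
        c * -y2, c * y3, c * y0, c * -y1;
        c * -y3, c * -y2, c * y1, c * y0] : Matrix (Fin 4) (Fin 4) ℝ).det
      = k * u * c ^ 3 * (y0 ^ 2 + y1 ^ 2 + y2 ^ 2 + y3 ^ 2) ^ 2 := by
  rw [det_fin_four]
  simp
  ring

set_option maxHeartbeats 1600000 in
/-- `det G = 32 / (|y|(1+|y|²)³(1+|t|²)²) > 0`. -/
theorem stmt_10 (t : Fin 2 → ℝ) (y : Fin 4 → ℝ) (hy : y ≠ 0) :
    (G t y).det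
      = 32 / (nY y * (1 + (y 0 ^ 2 + y 1 ^ 2 + y 2 ^ 2 + y 3 ^ 2)) ^ 3 *
          (1 + t 0 ^ 2 + t 1 ^ 2) ^ 2) ∧
    0 < (G t y).det := by
  have hQ : 0 < y 0 ^ 2 + y 1 ^ 2 + y 2 ^ 2 + y 3 ^ 2 := by
    obtain ⟨i, hi⟩ := Function.ne_iff.mp hy
    simp only [Pi.zero_apply] at hi
    fin_cases i <;> simp at hi <;> positivity
  have hr0 : 0 < nY y := Real.sqrt_pos.mpr hQ
  have hr2 : nY y ^ 2 = y 0 ^ 2 + y 1 ^ 2 + y 2 ^ 2 + y 3 ^ 2 := Real.sq_sqrt hQ.le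
  have hT : 0 < 1 + t 0 ^ 2 + t 1 ^ 2 := by positivity
  have h1r : 0 < 1 + nY y ^ 2 := by positivity
  have key : (G t y).det
      = 32 / (nY y * (1 + (y 0 ^ 2 + y 1 ^ 2 + y 2 ^ 2 + y 3 ^ 2)) ^ 3 *
          (1 + t 0 ^ 2 + t 1 ^ 2) ^ 2) := by
    rw [det6_gen (G t y) rfl rfl rfl rfl rfl rfl]
    simp only [G]
    simp [vc5, vc4, vc3, vc2, vc1]
    have hr0' := hr0.ne'
    have hQ' := hQ.ne'
    have hT' := hT.ne'
    have h1r' := h1r.ne'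
    have hD : ∀ i : Fin 3,
        (!![B t y i 0, B t y i 1, B t y i 2, B t y i 3;
            C y 0 0, C y 0 1, C y 0 2, C y 0 3;
            C y 1 0, C y 1 1, C y 1 2, C y 1 3;
            C y 2 0, C y 2 1, C y 2 2, C y 2 3] : Matrix (Fin 4) (Fin 4) ℝ).det
          = 2 * (![1 - t 0 ^ 2 - t 1 ^ 2, 2 * t 0, 2 * t 1] i) /
              (nY y * (y 0 ^ 2 + y 1 ^ 2 + y 2 ^ 2 + y 3 ^ 2) * (1 + nY y ^ 2) *
                (1 + t 0 ^ 2 + t 1 ^ 2)) := by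
      intro i
      have e : (!![B t y i 0, B t y i 1, B t y i 2, B t y i 3;
            C y 0 0, C y 0 1, C y 0 2, C y 0 3;
            C y 1 0, C y 1 1, C y 1 2, C y 1 3;
            C y 2 0, C y 2 1, C y 2 2, C y 2 3] : Matrix (Fin 4) (Fin 4) ℝ)
          = !![(2 / (nY y * (1 + nY y ^ 2) * (1 + t 0 ^ 2 + t 1 ^ 2))) *
                ((![1 - t 0 ^ 2 - t 1 ^ 2, 2 * t 0, 2 * t 1] i) * y 0),
              (2 / (nY y * (1 + nY y ^ 2) * (1 + t 0 ^ 2 + t 1 ^ 2))) *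
                ((![1 - t 0 ^ 2 - t 1 ^ 2, 2 * t 0, 2 * t 1] i) * y 1),
              (2 / (nY y * (1 + nY y ^ 2) * (1 + t 0 ^ 2 + t 1 ^ 2))) *
                ((![1 - t 0 ^ 2 - t 1 ^ 2, 2 * t 0, 2 * t 1] i) * y 2),
              (2 / (nY y * (1 + nY y ^ 2) * (1 + t 0 ^ 2 + t 1 ^ 2))) *
                ((![1 - t 0 ^ 2 - t 1 ^ 2, 2 * t 0, 2 * t 1] i) * y 3);
              (1 / (y 0 ^ 2 + y 1 ^ 2 + y 2 ^ 2 + y 3 ^ 2)) * -y 1,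
              (1 / (y 0 ^ 2 + y 1 ^ 2 + y 2 ^ 2 + y 3 ^ 2)) * y 0,
              (1 / (y 0 ^ 2 + y 1 ^ 2 + y 2 ^ 2 + y 3 ^ 2)) * -y 3,
              (1 / (y 0 ^ 2 + y 1 ^ 2 + y 2 ^ 2 + y 3 ^ 2)) * y 2;
              (1 / (y 0 ^ 2 + y 1 ^ 2 + y 2 ^ 2 + y 3 ^ 2)) * -y 2,
              (1 / (y 0 ^ 2 + y 1 ^ 2 + y 2 ^ 2 + y 3 ^ 2)) * y 3,
              (1 / (y 0 ^ 2 + y 1 ^ 2 + y 2 ^ 2 + y 3 ^ 2)) * y 0,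
              (1 / (y 0 ^ 2 + y 1 ^ 2 + y 2 ^ 2 + y 3 ^ 2)) * -y 1;
              (1 / (y 0 ^ 2 + y 1 ^ 2 + y 2 ^ 2 + y 3 ^ 2)) * -y 3,
              (1 / (y 0 ^ 2 + y 1 ^ 2 + y 2 ^ 2 + y 3 ^ 2)) * -y 2,
              (1 / (y 0 ^ 2 + y 1 ^ 2 + y 2 ^ 2 + y 3 ^ 2)) * y 1,
              (1 / (y 0 ^ 2 + y 1 ^ 2 + y 2 ^ 2 + y 3 ^ 2)) * y 0] := by
        ext a b
        fin_cases a <;> fin_cases b <;>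
          simp only [B, C, Matrix.smul_apply, Matrix.vecMulVec_apply, smul_eq_mul,
            Matrix.cons_val', Matrix.cons_val_zero, Matrix.cons_val_one, Matrix.head_cons,
            Matrix.empty_val', Matrix.cons_val_fin_one, Matrix.head_fin_const,
            Matrix.cons_val_two, Matrix.cons_val_three, Matrix.tail_cons, Matrix.of_apply, vc3, vc2, vc1]
      rw [e, Dval]
      field_simp
    rw [hD 0, hD 1, hD 2]
    simp only [A, Matrix.smul_apply, Matrix.add_apply, smul_eq_mul,
      Matrix.cons_val', Matrix.cons_val_zero, Matrix.cons_val_one, Matrix.head_cons,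
      Matrix.empty_val', Matrix.cons_val_fin_one, Matrix.head_fin_const,
      Matrix.cons_val_two, Matrix.cons_val_three, Matrix.tail_cons, Matrix.of_apply,
      vc3, vc2, vc1]
    rw [← hr2]
    field_simp
    ring
  refine ⟨key, ?_⟩
  rw [key]
  positivity
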